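/- arXiv:2511.14468 — 5 statements merged into one kernel-verified Lean document; each statement's English description precedes it below -/
import Mathlib

section
/- Adding the terminal position *R to a position swaps Left and Right outcomes and preserves N and P: for any position G, o(G) = L iff o(G + *R) = R; o(G) = R iff o(G + *R) = L; o(G) = P iff o(G + *R) = P; o(G) = N iff o(G + *R) = N. -/
/-- Positions of LR-ending partisan games: two terminals and finite option sets
(represented as lists; set-like behavior is captured by the `Iso` relation). -/
inductive Pos : Type
  | termL : Pos
  | termR : Pos
  | opts : List Pos → Pos

namespace Pos

/-- Valid positions: every non-terminal position has a nonempty set of options. -/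
inductive Valid : Pos → Prop
  | termL : Valid termL
  | termR : Valid termR
  | opts : ∀ gs : List Pos, gs ≠ [] → (∀ g ∈ gs, Valid g) → Valid (opts gs)

/-- Disjunctive sum. -/
def sum : Pos → Pos → Pos
  | termL, termL => termL
  | termL, termR => termR
  | termR, termL => termR
  | termR, termR => termL
  | termL, opts hs => opts (hs.attach.map (fun h => sum termL h.1))
  | termR, opts hs => opts (hs.attach.map (fun h => sum termR h.1))
  | opts gs, termL => opts (gs.attach.map (fun g => sum g.1 termL))
  | opts gs, termR => opts (gs.attach.map (fun g => sum g.1 termR))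
  | opts gs, opts hs =>
      opts (gs.attach.map (fun g => sum g.1 (opts hs)) ++
            hs.attach.map (fun h => sum (opts gs) h.1))
termination_by g h => sizeOf g + sizeOf h
decreasing_by
  all_goals
    first
      | (have := List.sizeOf_lt_of_mem h.2; simp_all; omega)
      | (have := List.sizeOf_lt_of_mem g.2; simp_all; omega)

/-- Conjugate: swap the two kinds of terminal positions. -/
def conj : Pos → Pos
  | termL => termR
  | termR => termL
  | opts gs => opts (gs.attach.map (fun g => conj g.1))
decreasing_by
  have := List.sizeOf_lt_of_mem g.2; simp_all; omega

/-- Isomorphism of game trees (positions viewed as sets of options). -/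
def Iso : Pos → Pos → Prop
  | termL, termL => True
  | termR, termR => True
  | opts gs, opts hs =>
      (∀ g ∈ gs.attach, ∃ h ∈ hs.attach, Iso g.1 h.1) ∧
      (∀ h ∈ hs.attach, ∃ g ∈ gs.attach, Iso g.1 h.1)
  | _, _ => False
termination_by g h => sizeOf g + sizeOf h
decreasing_by
  all_goals
    (have hg := List.sizeOf_lt_of_mem g.2; have hh := List.sizeOf_lt_of_mem h.2;
     simp_all; omega)

inductive Player : Type
  | left : Player
  | right : Player
  deriving DecidableEq

/-- `Wins p b G` : player `p` has a winning strategy from position `G`,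
where `b = true` means it is `p`'s turn to move and `b = false` means the
opponent is to move.  A terminal position is won by the player given by
its label, regardless of whose turn it is. -/
inductive Wins : Player → Bool → Pos → Prop
  | termL : ∀ b, Wins Player.left b termL
  | termR : ∀ b, Wins Player.right b termR
  | move : ∀ (p : Player) (gs : List Pos) (g : Pos), g ∈ gs →
      Wins p false g → Wins p true (opts gs)
  | wait : ∀ (p : Player) (gs : List Pos),
      (∀ g, g ∈ gs → Wins p true g) → Wins p false (opts gs)

inductive Outcome : Type
  | L : Outcome
  | R : Outcome
  | N : Outcome
  | P : Outcome
  deriving DecidableEq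

/-- The outcome of a position. -/
noncomputable def outcome (G : Pos) : Outcome := by
  classical
  exact
    if Wins Player.left true G then
      if Wins Player.left false G then Outcome.L else Outcome.N
    else
      if Wins Player.left false G then Outcome.P else Outcome.R

/-- Equivalence of positions: the outcome agrees in every (valid) context. -/
def equiv (G H : Pos) : Prop :=
  ∀ X : Pos, Valid X → outcome (sum G X) = outcome (sum H X)

end Pos

namespace Pos

def psw : Player → Player
  | .left => .right
  | .right => .left

lemma wins_sum_termR_aux : ∀ n (G : Pos), sizeOf G ≤ n → ∀ p b,
    Wins p b (sum G termR) ↔ Wins (psw p) b G := by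
  intro n
  induction n with
  | zero => intro G hG; cases G <;> simp at hG
  | succ n ih =>
    intro G hG p b
    cases G with
    | termL =>
      simp only [sum]
      cases p with
      | left =>
        simp only [psw]
        constructor <;> intro h <;> cases h
      | right =>
        simp only [psw]
        exact ⟨fun _ => Wins.termL _, fun _ => Wins.termR _⟩
    | termR =>
      simp only [sum]
      cases p with
      | left =>
        simp only [psw]
        exact ⟨fun _ => Wins.termR _, fun _ => Wins.termL _⟩
      | right =>
        simp only [psw]
        constructor <;> intro h <;> cases h
    | opts gs =>
      have hsz : ∀ g ∈ gs, sizeOf g ≤ n := by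
        intro g hg
        have := List.sizeOf_lt_of_mem hg
        simp at hG; omega
      simp only [sum]
      constructor
      · intro h
        cases h with
        | move p _ g hg hw =>
          simp only [List.mem_map, List.mem_attach, true_and, Subtype.exists] at hg
          obtain ⟨g0, hg0, rfl⟩ := hg
          exact Wins.move _ _ g0 hg0 ((ih g0 (hsz g0 hg0) p false).mp hw)
        | wait =>
          apply Wins.wait
          intro g hg
          rename_i hall
          have := hall (sum g termR) (by
            simp only [List.mem_map, List.mem_attach, true_and, Subtype.exists]
            exact ⟨g, hg, rfl⟩)
          exact (ih g (hsz g hg) p true).mp this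
      · intro h
        obtain ⟨q, hq⟩ : ∃ q, psw p = q := ⟨_, rfl⟩
        rw [hq] at h
        cases h with
        | move _ _ g hg hw =>
          apply Wins.move _ _ (sum g termR)
          · simp only [List.mem_map, List.mem_attach, true_and, Subtype.exists]
            exact ⟨g, hg, rfl⟩
          · exact (ih g (hsz g hg) p false).mpr (by rw [hq]; exact hw)
        | wait =>
          apply Wins.wait
          intro g' hg'
          simp only [List.mem_map, List.mem_attach, true_and, Subtype.exists] at hg'
          obtain ⟨g0, hg0, rfl⟩ := hg'
          rename_i hall
          exact (ih g0 (hsz g0 hg0) p true).mpr (by rw [hq]; exact hall g0 hg0)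

lemma wins_sum_termR (G : Pos) (p : Player) (b : Bool) :
    Wins p b (sum G termR) ↔ Wins (psw p) b G :=
  wins_sum_termR_aux (sizeOf G) G le_rfl p b

lemma not_both_aux : ∀ n (G : Pos), sizeOf G ≤ n → ∀ p b,
    Wins p b G → Wins (psw p) (!b) G → False := by
  intro n
  induction n with
  | zero => intro G hG; cases G <;> simp at hG
  | succ n ih =>
    intro G hG p b h1 h2
    obtain ⟨c, hc⟩ : ∃ c, (!b) = c := ⟨_, rfl⟩
    rw [hc] at h2
    cases h1 with
    | termL => simp only [psw] at h2; cases h2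
    | termR => simp only [psw] at h2; cases h2
    | move p gs g hg hw =>
      have hsz : sizeOf g ≤ n := by
        have := List.sizeOf_lt_of_mem hg; simp at hG; omega
      obtain ⟨q, hq⟩ : ∃ q, psw p = q := ⟨_, rfl⟩
      rw [hq] at h2
      cases h2 with
      | wait _ _ hall =>
        exact ih g hsz p false hw (by rw [hq]; exact hall g hg)
      | move _ _ g' hg' hw' => simp at hc
    | wait p gs hall =>
      obtain ⟨q, hq⟩ : ∃ q, psw p = q := ⟨_, rfl⟩
      rw [hq] at h2
      cases h2 with
      | move _ _ g hg hw =>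
        have hsz : sizeOf g ≤ n := by
          have := List.sizeOf_lt_of_mem hg; simp at hG; omega
        exact ih g hsz p true (hall g hg) (by rw [hq]; exact hw)
      | wait _ _ hall' => simp at hc

lemma not_both (G : Pos) (p : Player) (b : Bool) :
    Wins p b G → Wins (psw p) (!b) G → False :=
  not_both_aux (sizeOf G) G le_rfl p b

lemma total_aux : ∀ n (G : Pos), sizeOf G ≤ n → ∀ p b,
    Wins p b G ∨ Wins (psw p) (!b) G := by
  intro n
  induction n with
  | zero => intro G hG; cases G <;> simp at hG
  | succ n ih =>
    intro G hG p b
    cases G with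
    | termL =>
      cases p with
      | left => exact Or.inl (Wins.termL _)
      | right => exact Or.inr (by simp only [psw]; exact Wins.termL _)
    | termR =>
      cases p with
      | left => exact Or.inr (by simp only [psw]; exact Wins.termR _)
      | right => exact Or.inl (Wins.termR _)
    | opts gs =>
      have hsz : ∀ g ∈ gs, sizeOf g ≤ n := by
        intro g hg
        have := List.sizeOf_lt_of_mem hg
        simp at hG; omega
      cases b with
      | true =>
        by_cases h : ∃ g ∈ gs, Wins p false g
        · obtain ⟨g, hg, hw⟩ := h
          exact Or.inl (Wins.move _ _ g hg hw)
        · push_neg at h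
          refine Or.inr (Wins.wait _ _ fun g hg => ?_)
          rcases ih g (hsz g hg) p false with h' | h'
          · exact absurd h' (h g hg)
          · simpa using h'
      | false =>
        by_cases h : ∀ g ∈ gs, Wins p true g
        · exact Or.inl (Wins.wait _ _ h)
        · push_neg at h
          obtain ⟨g, hg, hw⟩ := h
          rcases ih g (hsz g hg) p true with h' | h'
          · exact absurd h' hw
          · exact Or.inr (Wins.move _ _ g hg (by simpa using h'))

lemma total (G : Pos) (p : Player) (b : Bool) :
    Wins p b G ∨ Wins (psw p) (!b) G :=
  total_aux (sizeOf G) G le_rfl p b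

lemma wins_right_iff (G : Pos) (b : Bool) :
    Wins Player.right b G ↔ ¬ Wins Player.left (!b) G := by
  constructor
  · intro h h'
    exact not_both G Player.left (!b) h' (by simpa [psw] using h)
  · intro h
    rcases total G Player.left (!b) with h' | h'
    · exact absurd h' h
    · simpa [psw] using h'

end Pos

/-- adding the terminal `*R` swaps the outcomes L and R and
preserves the outcomes N and P. -/
theorem outcome_add_termR (G : Pos) (hG : G.Valid) :
    (Pos.outcome G = Pos.Outcome.L ↔ Pos.outcome (Pos.sum G Pos.termR) = Pos.Outcome.R) ∧
    (Pos.outcome G = Pos.Outcome.R ↔ Pos.outcome (Pos.sum G Pos.termR) = Pos.Outcome.L) ∧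
    (Pos.outcome G = Pos.Outcome.P ↔ Pos.outcome (Pos.sum G Pos.termR) = Pos.Outcome.P) ∧
    (Pos.outcome G = Pos.Outcome.N ↔ Pos.outcome (Pos.sum G Pos.termR) = Pos.Outcome.N) := by
  have h1 : ∀ b, Pos.Wins Pos.Player.left b (Pos.sum G Pos.termR) ↔
      ¬ Pos.Wins Pos.Player.left (!b) G := by
    intro b
    rw [Pos.wins_sum_termR]
    exact Pos.wins_right_iff G b
  have ht := h1 true
  have hf := h1 false
  simp only [Pos.outcome]
  by_cases hA : Pos.Wins Pos.Player.left true G <;>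
    by_cases hB : Pos.Wins Pos.Player.left false G <;>
      simp_all [Pos.outcome]
end

section
/- For any position G in an LR-ending partisan game, G + G ∈ L ∪ P, i.e. Left wins the sum of a position with itself when moving second. -/
namespace Pos

lemma sum_opts_right (G : Pos) (hs : List Pos) :
    ∃ L, sum G (opts hs) = opts L ∧ ∀ h ∈ hs, sum G h ∈ L := by
  cases G with
  | termL =>
      refine ⟨_, by rw [sum], ?_⟩
      intro h hh
      exact List.mem_map.2 ⟨⟨h, hh⟩, List.mem_attach _ _, rfl⟩
  | termR =>
      refine ⟨_, by rw [sum], ?_⟩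
      intro h hh
      exact List.mem_map.2 ⟨⟨h, hh⟩, List.mem_attach _ _, rfl⟩
  | opts gs =>
      refine ⟨_, by rw [sum], ?_⟩
      intro h hh
      exact List.mem_append_right _ (List.mem_map.2 ⟨⟨h, hh⟩, List.mem_attach _ _, rfl⟩)

lemma sum_opts_left (gs : List Pos) (H : Pos) :
    ∃ L, sum (opts gs) H = opts L ∧ ∀ g ∈ gs, sum g H ∈ L := by
  cases H with
  | termL =>
      refine ⟨_, by rw [sum], ?_⟩
      intro g hg
      exact List.mem_map.2 ⟨⟨g, hg⟩, List.mem_attach _ _, rfl⟩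
  | termR =>
      refine ⟨_, by rw [sum], ?_⟩
      intro g hg
      exact List.mem_map.2 ⟨⟨g, hg⟩, List.mem_attach _ _, rfl⟩
  | opts hs =>
      refine ⟨_, by rw [sum], ?_⟩
      intro g hg
      exact List.mem_append_left _ (List.mem_map.2 ⟨⟨g, hg⟩, List.mem_attach _ _, rfl⟩)

theorem wins_self (G : Pos) : Wins Player.left false (sum G G) := by
  cases G with
  | termL => rw [sum]; exact Wins.termL false
  | termR => rw [sum]; exact Wins.termL false
  | opts gs =>
      rw [sum]
      apply Wins.wait
      intro x hx
      rcases List.mem_append.1 hx with hx | hx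
      · rcases List.mem_map.1 hx with ⟨⟨g, hg⟩, _, rfl⟩
        obtain ⟨L, hL, hmem⟩ := sum_opts_right g gs
        rw [hL]
        exact Wins.move _ _ _ (hmem g hg) (wins_self g)
      · rcases List.mem_map.1 hx with ⟨⟨g, hg⟩, _, rfl⟩
        obtain ⟨L, hL, hmem⟩ := sum_opts_left gs g
        rw [hL]
        exact Wins.move _ _ _ (hmem g hg) (wins_self g)
termination_by sizeOf G
decreasing_by
  all_goals (have := List.sizeOf_lt_of_mem hg; simp_all; omega)

end Pos

/-- for any position `G`, the sum `G + G` lies in L ∪ P,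
i.e. Left wins `G + G` moving second. -/
theorem sum_self_mem_L_union_P (G : Pos) (hG : G.Valid) :
    Pos.outcome (Pos.sum G G) = Pos.Outcome.L ∨ Pos.outcome (Pos.sum G G) = Pos.Outcome.P := by
  have h := Pos.wins_self G
  unfold Pos.outcome
  split_ifs with h1 h2 h2 <;> first
    | exact Or.inl rfl
    | exact Or.inr rfl
    | exact absurd h h2
end

section
/- For any position G in an LR-ending partisan game, G + conj(G) ∈ R ∪ P, where conj(G) is the conjugate obtained by swapping all terminal labels *L and *R in the game tree of G. Consequently, if G = conj(G) then G + G ∈ P. -/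
namespace Pos

theorem wins_true_elim {p : Player} {gs : List Pos} (h : Wins p true (opts gs)) :
    ∃ g ∈ gs, Wins p false g := by
  cases h
  rename_i g hw hg
  exact ⟨g, hg, hw⟩

theorem wins_false_elim {p : Player} {gs : List Pos} (h : Wins p false (opts gs)) :
    ∀ g ∈ gs, Wins p true g := by
  cases h
  rename_i h
  exact h

theorem isoRefl : ∀ G : Pos, Iso G G
  | termL => by simp [Iso]
  | termR => by simp [Iso]
  | opts gs => by
      simp only [Iso]
      constructor
      · intro g hg; exact ⟨g, hg, isoRefl g.1⟩
      · intro g hg; exact ⟨g, hg, isoRefl g.1⟩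
termination_by G => sizeOf G
decreasing_by
  all_goals (have := List.sizeOf_lt_of_mem g.2; simp_all; omega)

theorem notboth : ∀ (X : Pos),
    (Wins Player.left true X → Wins Player.right false X → False) ∧
    (Wins Player.left false X → Wins Player.right true X → False)
  | termL => by constructor <;> (intro _ hr; cases hr)
  | termR => by constructor <;> (intro hl _; cases hl)
  | opts gs => by
      constructor
      · intro hl hr
        obtain ⟨g, hg, hw⟩ := wins_true_elim hl
        exact (notboth g).2 hw (wins_false_elim hr g hg)
      · intro hl hr
        obtain ⟨g, hg, hw⟩ := wins_true_elim hr
        exact (notboth g).1 (wins_false_elim hl g hg) hw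
termination_by X => sizeOf X
decreasing_by
  all_goals (have := List.sizeOf_lt_of_mem hg; simp_all; omega)

theorem winsIso : ∀ (X Y : Pos), Iso X Y → ∀ p b, Wins p b X → Wins p b Y
  | termL, termL, _, _, _, w => w
  | termR, termR, _, _, _, w => w
  | termL, termR, h, _, _, _ => by simp [Iso] at h
  | termL, opts _, h, _, _, _ => by simp [Iso] at h
  | termR, termL, h, _, _, _ => by simp [Iso] at h
  | termR, opts _, h, _, _, _ => by simp [Iso] at h
  | opts _, termL, h, _, _, _ => by simp [Iso] at h
  | opts _, termR, h, _, _, _ => by simp [Iso] at h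
  | opts gs, opts hs, h, p, b, w => by
      simp only [Iso] at h
      obtain ⟨fwd, bwd⟩ := h
      cases b with
      | true =>
        obtain ⟨g, hg, hw⟩ := wins_true_elim w
        obtain ⟨y, hy, hiso⟩ := fwd ⟨g, hg⟩ (List.mem_attach _ _)
        exact Wins.move p hs y.1 y.2 (winsIso g y.1 hiso p false hw)
      | false =>
        apply Wins.wait
        intro y hy
        obtain ⟨x, hx, hiso⟩ := bwd ⟨y, hy⟩ (List.mem_attach _ _)
        exact winsIso x.1 y hiso p true (wins_false_elim w x.1 x.2)
termination_by X Y => sizeOf X + sizeOf Y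
decreasing_by
  all_goals
    first
      | (have h1 := List.sizeOf_lt_of_mem hg; have h2 := List.sizeOf_lt_of_mem y.2;
         simp_all; omega)
      | (have h1 := List.sizeOf_lt_of_mem hy; have h2 := List.sizeOf_lt_of_mem x.2;
         simp_all; omega)

theorem wins_move_right (p : Player) (G h : Pos) (hs : List Pos) (hh : h ∈ hs)
    (w : Wins p false (sum G h)) : Wins p true (sum G (opts hs)) := by
  have hmem : ∀ f : Pos → Pos, f h ∈ hs.attach.map (fun x => f x.1) :=
    fun f => List.mem_map.mpr ⟨⟨h, hh⟩, List.mem_attach _ _, rfl⟩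
  cases G with
  | termL =>
      rw [show sum termL (opts hs) = opts (hs.attach.map (fun x => sum termL x.1)) from by
        rw [sum]]
      exact Wins.move p _ _ (hmem (fun x => sum termL x)) w
  | termR =>
      rw [show sum termR (opts hs) = opts (hs.attach.map (fun x => sum termR x.1)) from by
        rw [sum]]
      exact Wins.move p _ _ (hmem (fun x => sum termR x)) w
  | opts gs =>
      rw [show sum (opts gs) (opts hs) =
        opts (gs.attach.map (fun g => sum g.1 (opts hs)) ++
              hs.attach.map (fun x => sum (opts gs) x.1)) from by rw [sum]]
      exact Wins.move p _ _ (List.mem_append_right _ (hmem (fun x => sum (opts gs) x))) w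

theorem wins_move_left (p : Player) (g H : Pos) (gs : List Pos) (hg : g ∈ gs)
    (w : Wins p false (sum g H)) : Wins p true (sum (opts gs) H) := by
  have hmem : ∀ f : Pos → Pos, f g ∈ gs.attach.map (fun x => f x.1) :=
    fun f => List.mem_map.mpr ⟨⟨g, hg⟩, List.mem_attach _ _, rfl⟩
  cases H with
  | termL =>
      rw [show sum (opts gs) termL = opts (gs.attach.map (fun x => sum x.1 termL)) from by
        rw [sum]]
      exact Wins.move p _ _ (hmem (fun x => sum x termL)) w
  | termR =>
      rw [show sum (opts gs) termR = opts (gs.attach.map (fun x => sum x.1 termR)) from by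
        rw [sum]]
      exact Wins.move p _ _ (hmem (fun x => sum x termR)) w
  | opts hs =>
      rw [show sum (opts gs) (opts hs) =
        opts (gs.attach.map (fun x => sum x.1 (opts hs)) ++
              hs.attach.map (fun x => sum (opts gs) x.1)) from by rw [sum]]
      exact Wins.move p _ _ (List.mem_append_left _ (hmem (fun x => sum x (opts hs)))) w

theorem right_wins_sum_conj : ∀ G : Pos, Wins Player.right false (sum G (conj G))
  | termL => by
      rw [show conj termL = termR from by rw [conj],
          show sum termL termR = termR from by rw [sum]]
      exact Wins.termR false
  | termR => by
      rw [show conj termR = termL from by rw [conj],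
          show sum termR termL = termR from by rw [sum]]
      exact Wins.termR false
  | opts gs => by
      rw [show conj (opts gs) = opts (gs.attach.map fun g => conj g.1) from by rw [conj]]
      rw [show sum (opts gs) (opts (gs.attach.map fun g => conj g.1)) =
        opts (gs.attach.map (fun g => sum g.1 (opts (gs.attach.map fun g => conj g.1))) ++
              (gs.attach.map fun g => conj g.1).attach.map
                (fun h => sum (opts gs) h.1)) from by rw [sum]]
      apply Wins.wait
      intro x hx
      rcases List.mem_append.mp hx with hA | hB
      · obtain ⟨⟨g, hg⟩, _, rfl⟩ := List.mem_map.mp hA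
        exact wins_move_right _ _ _ _
          (List.mem_map.mpr ⟨⟨g, hg⟩, List.mem_attach _ _, rfl⟩)
          (right_wins_sum_conj g)
      · obtain ⟨⟨h, hh⟩, _, rfl⟩ := List.mem_map.mp hB
        obtain ⟨⟨g, hg⟩, _, rfl⟩ := List.mem_map.mp hh
        exact wins_move_left _ g _ gs hg (right_wins_sum_conj g)
termination_by G => sizeOf G
decreasing_by
  all_goals (have := List.sizeOf_lt_of_mem hg; simp_all; omega)

theorem left_wins_sum_self : ∀ G : Pos, Wins Player.left false (sum G G)
  | termL => by
      rw [show sum termL termL = termL from by rw [sum]]; exact Wins.termL false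
  | termR => by
      rw [show sum termR termR = termL from by rw [sum]]; exact Wins.termL false
  | opts gs => by
      rw [show sum (opts gs) (opts gs) =
        opts (gs.attach.map (fun g => sum g.1 (opts gs)) ++
              gs.attach.map (fun h => sum (opts gs) h.1)) from by rw [sum]]
      apply Wins.wait
      intro x hx
      rcases List.mem_append.mp hx with hA | hB
      · obtain ⟨⟨g, hg⟩, _, rfl⟩ := List.mem_map.mp hA
        exact wins_move_right _ _ g gs hg (left_wins_sum_self g)
      · obtain ⟨⟨g, hg⟩, _, rfl⟩ := List.mem_map.mp hB
        exact wins_move_left _ g _ gs hg (left_wins_sum_self g)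
termination_by G => sizeOf G
decreasing_by
  all_goals (have := List.sizeOf_lt_of_mem hg; simp_all; omega)

theorem iso_opts {L1 L2 : List Pos}
    (h1 : ∀ x ∈ L1, ∃ y ∈ L2, Iso x y)
    (h2 : ∀ y ∈ L2, ∃ x ∈ L1, Iso x y) : Iso (opts L1) (opts L2) := by
  simp only [Iso]
  constructor
  · intro g hg
    obtain ⟨y, hy, hi⟩ := h1 g.1 g.2
    exact ⟨⟨y, hy⟩, List.mem_attach _ _, hi⟩
  · intro h hh
    obtain ⟨x, hx, hi⟩ := h2 h.1 h.2
    exact ⟨⟨x, hx⟩, List.mem_attach _ _, hi⟩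

theorem sumCongrRight : ∀ (A H H' : Pos), Iso H H' → Iso (sum A H) (sum A H')
  | A, termL, termL, _ => isoRefl _
  | A, termR, termR, _ => isoRefl _
  | _, termL, termR, h => by simp [Iso] at h
  | _, termL, opts _, h => by simp [Iso] at h
  | _, termR, termL, h => by simp [Iso] at h
  | _, termR, opts _, h => by simp [Iso] at h
  | _, opts _, termL, h => by simp [Iso] at h
  | _, opts _, termR, h => by simp [Iso] at h
  | termL, opts hs, opts hs', h => by
      obtain ⟨fwd, bwd⟩ := (by simpa only [Iso] using h :
        (∀ g ∈ hs.attach, ∃ y ∈ hs'.attach, Iso g.1 y.1) ∧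
        (∀ y ∈ hs'.attach, ∃ g ∈ hs.attach, Iso g.1 y.1))
      rw [show sum termL (opts hs) = opts (hs.attach.map (fun x => sum termL x.1)) from by
            rw [sum],
          show sum termL (opts hs') = opts (hs'.attach.map (fun x => sum termL x.1)) from by
            rw [sum]]
      apply iso_opts
      · intro x hx
        obtain ⟨⟨a, ha⟩, _, rfl⟩ := List.mem_map.mp hx
        obtain ⟨y, _, hi⟩ := fwd ⟨a, ha⟩ (List.mem_attach _ _)
        exact ⟨sum termL y.1, List.mem_map.mpr ⟨y, List.mem_attach _ _, rfl⟩,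
          sumCongrRight termL a y.1 hi⟩
      · intro y hy
        obtain ⟨⟨b, hb⟩, _, rfl⟩ := List.mem_map.mp hy
        obtain ⟨x, _, hi⟩ := bwd ⟨b, hb⟩ (List.mem_attach _ _)
        exact ⟨sum termL x.1, List.mem_map.mpr ⟨x, List.mem_attach _ _, rfl⟩,
          sumCongrRight termL x.1 b hi⟩
  | termR, opts hs, opts hs', h => by
      obtain ⟨fwd, bwd⟩ := (by simpa only [Iso] using h :
        (∀ g ∈ hs.attach, ∃ y ∈ hs'.attach, Iso g.1 y.1) ∧
        (∀ y ∈ hs'.attach, ∃ g ∈ hs.attach, Iso g.1 y.1))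
      rw [show sum termR (opts hs) = opts (hs.attach.map (fun x => sum termR x.1)) from by
            rw [sum],
          show sum termR (opts hs') = opts (hs'.attach.map (fun x => sum termR x.1)) from by
            rw [sum]]
      apply iso_opts
      · intro x hx
        obtain ⟨⟨a, ha⟩, _, rfl⟩ := List.mem_map.mp hx
        obtain ⟨y, _, hi⟩ := fwd ⟨a, ha⟩ (List.mem_attach _ _)
        exact ⟨sum termR y.1, List.mem_map.mpr ⟨y, List.mem_attach _ _, rfl⟩,
          sumCongrRight termR a y.1 hi⟩
      · intro y hy
        obtain ⟨⟨b, hb⟩, _, rfl⟩ := List.mem_map.mp hy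
        obtain ⟨x, _, hi⟩ := bwd ⟨b, hb⟩ (List.mem_attach _ _)
        exact ⟨sum termR x.1, List.mem_map.mpr ⟨x, List.mem_attach _ _, rfl⟩,
          sumCongrRight termR x.1 b hi⟩
  | opts as, opts hs, opts hs', h => by
      obtain ⟨fwd, bwd⟩ := (by simpa only [Iso] using h :
        (∀ g ∈ hs.attach, ∃ y ∈ hs'.attach, Iso g.1 y.1) ∧
        (∀ y ∈ hs'.attach, ∃ g ∈ hs.attach, Iso g.1 y.1))
      rw [show sum (opts as) (opts hs) =
            opts (as.attach.map (fun x => sum x.1 (opts hs)) ++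
                  hs.attach.map (fun x => sum (opts as) x.1)) from by rw [sum],
          show sum (opts as) (opts hs') =
            opts (as.attach.map (fun x => sum x.1 (opts hs')) ++
                  hs'.attach.map (fun x => sum (opts as) x.1)) from by rw [sum]]
      apply iso_opts
      · intro x hx
        rcases List.mem_append.mp hx with hA | hB
        · obtain ⟨⟨a, ha⟩, _, rfl⟩ := List.mem_map.mp hA
          exact ⟨sum a (opts hs'),
            List.mem_append_left _
              (List.mem_map.mpr ⟨⟨a, ha⟩, List.mem_attach _ _, rfl⟩),
            sumCongrRight a (opts hs) (opts hs') h⟩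
        · obtain ⟨⟨b, hb⟩, _, rfl⟩ := List.mem_map.mp hB
          obtain ⟨y, _, hi⟩ := fwd ⟨b, hb⟩ (List.mem_attach _ _)
          exact ⟨sum (opts as) y.1,
            List.mem_append_right _
              (List.mem_map.mpr ⟨y, List.mem_attach _ _, rfl⟩),
            sumCongrRight (opts as) b y.1 hi⟩
      · intro y hy
        rcases List.mem_append.mp hy with hA | hB
        · obtain ⟨⟨a, ha⟩, _, rfl⟩ := List.mem_map.mp hA
          exact ⟨sum a (opts hs),
            List.mem_append_left _
              (List.mem_map.mpr ⟨⟨a, ha⟩, List.mem_attach _ _, rfl⟩),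
            sumCongrRight a (opts hs) (opts hs') h⟩
        · obtain ⟨⟨b, hb⟩, _, rfl⟩ := List.mem_map.mp hB
          obtain ⟨x, _, hi⟩ := bwd ⟨b, hb⟩ (List.mem_attach _ _)
          exact ⟨sum (opts as) x.1,
            List.mem_append_right _
              (List.mem_map.mpr ⟨x, List.mem_attach _ _, rfl⟩),
            sumCongrRight (opts as) x.1 b hi⟩
termination_by A H H' => sizeOf A + sizeOf H + sizeOf H'
decreasing_by
  all_goals
    first
      | (have h1 := List.sizeOf_lt_of_mem ha; have h2 := List.sizeOf_lt_of_mem y.2;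
         simp_all; omega)
      | (have h1 := List.sizeOf_lt_of_mem hb; have h2 := List.sizeOf_lt_of_mem x.2;
         simp_all; omega)
      | (have h1 := List.sizeOf_lt_of_mem ha; simp_all; omega)
      | (have h1 := List.sizeOf_lt_of_mem hb; have h2 := List.sizeOf_lt_of_mem y.2;
         simp_all; omega)
      | (have h1 := List.sizeOf_lt_of_mem hb; have h2 := List.sizeOf_lt_of_mem x.2;
         simp_all; omega)

end Pos

/-- `G + conj(G)` lies in R ∪ P; consequently a self-conjugate
position `G` satisfies `G + G ∈ P`. -/
theorem sum_conj_mem_R_union_P :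
    (∀ G : Pos, G.Valid →
      Pos.outcome (Pos.sum G G.conj) = Pos.Outcome.R ∨
      Pos.outcome (Pos.sum G G.conj) = Pos.Outcome.P) ∧
    (∀ G : Pos, G.Valid → Pos.Iso G G.conj →
      Pos.outcome (Pos.sum G G) = Pos.Outcome.P) := by
  constructor
  · intro G _
    have hR := Pos.right_wins_sum_conj G
    have hnl : ¬ Pos.Wins Pos.Player.left true (Pos.sum G G.conj) :=
      fun hl => (Pos.notboth _).1 hl hR
    unfold Pos.outcome
    rw [if_neg hnl]
    by_cases h : Pos.Wins Pos.Player.left false (Pos.sum G G.conj)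
    · right; rw [if_pos h]
    · left; rw [if_neg h]
  · intro G _ hiso
    have hisoSum : Pos.Iso (Pos.sum G G) (Pos.sum G G.conj) :=
      Pos.sumCongrRight G G G.conj hiso
    have hR := Pos.right_wins_sum_conj G
    have hnl : ¬ Pos.Wins Pos.Player.left true (Pos.sum G G) := fun hl =>
      (Pos.notboth _).1 (Pos.winsIso _ _ hisoSum _ _ hl) hR
    have hl : Pos.Wins Pos.Player.left false (Pos.sum G G) := Pos.left_wins_sum_self G
    unfold Pos.outcome
    rw [if_neg hnl, if_pos hl]
end

section
/- If G is a position of an LR-ending partisan game with G = conj(G) (for instance G = {*L, *R}), then for every position G', the sum G + G' is not equivalent to *L. Hence G has no additive inverse in the monoid of game values, and this monoid is not a group. -/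
namespace Pos

theorem conj_opts (gs : List Pos) : conj (opts gs) = opts (gs.map conj) := by
  rw [conj]; simp only [List.map_subtype, List.unattach_attach]

theorem conj_conj : ∀ A : Pos, conj (conj A) = A
  | termL => by rw [conj, conj]
  | termR => by rw [conj, conj]
  | opts gs => by
      rw [conj_opts, conj_opts, List.map_map]
      congr 1
      exact (List.map_congr_left fun g _ => conj_conj g).trans (List.map_id gs)

theorem sum_termL_left : ∀ B : Pos, sum termL B = B
  | termL => by rw [sum]
  | termR => by rw [sum]
  | opts hs => by
      rw [sum]
      simp only [List.map_subtype, List.unattach_attach]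
      congr 1
      exact (List.map_congr_left fun h _ => sum_termL_left h).trans (List.map_id hs)

theorem sum_termR_left : ∀ B : Pos, sum termR B = conj B
  | termL => by rw [sum, conj]
  | termR => by rw [sum, conj]
  | opts hs => by
      rw [sum, conj_opts]
      simp only [List.map_subtype, List.unattach_attach]
      congr 1
      exact List.map_congr_left fun h _ => sum_termR_left h

theorem sum_termL_right : ∀ A : Pos, sum A termL = A
  | termL => by rw [sum]
  | termR => by rw [sum]
  | opts gs => by
      rw [sum]
      simp only [List.map_subtype, List.unattach_attach]
      congr 1
      exact (List.map_congr_left fun g _ => sum_termL_right g).trans (List.map_id gs)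

theorem sum_termR_right : ∀ A : Pos, sum A termR = conj A
  | termL => by rw [sum, conj]
  | termR => by rw [sum, conj]
  | opts gs => by
      rw [sum, conj_opts]
      simp only [List.map_subtype, List.unattach_attach]
      congr 1
      exact List.map_congr_left fun g _ => sum_termR_right g

theorem sum_opts_opts (gs hs : List Pos) :
    sum (opts gs) (opts hs) =
      opts (gs.map (fun g => sum g (opts hs)) ++ hs.map (fun h => sum (opts gs) h)) := by
  rw [sum]; simp only [List.map_subtype, List.unattach_attach]

theorem conj_sum : ∀ A B : Pos, conj (sum A B) = sum (conj A) B
  | termL, B => by rw [sum_termL_left, conj, sum_termR_left]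
  | termR, B => by rw [sum_termR_left, conj_conj, conj, sum_termL_left]
  | opts gs, termL => by rw [sum_termL_right, sum_termL_right]
  | opts gs, termR => by rw [sum_termR_right, sum_termR_right]
  | opts gs, opts hs => by
      rw [sum_opts_opts, conj_opts, conj_opts, sum_opts_opts, List.map_append, List.map_map,
        List.map_map, List.map_map]
      congr 2
      · exact List.map_congr_left fun g _ => conj_sum g (opts hs)
      · exact List.map_congr_left fun h _ => (conj_sum (opts gs) h).trans (by rw [conj_opts])

theorem iso_opts_iff (gs hs : List Pos) :
    Iso (opts gs) (opts hs) ↔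
      (∀ g ∈ gs, ∃ h ∈ hs, Iso g h) ∧ (∀ h ∈ hs, ∃ g ∈ gs, Iso g h) := by
  rw [Iso]; simp

theorem eq_termL_of_iso {B : Pos} (h : Iso termL B) : B = termL := by
  cases B <;> first | rfl | simp [Iso] at h

theorem eq_termR_of_iso {B : Pos} (h : Iso termR B) : B = termR := by
  cases B <;> first | rfl | simp [Iso] at h

theorem exists_eq_opts_of_iso {gs : List Pos} {B : Pos} (h : Iso (opts gs) B) :
    ∃ hs, B = opts hs := by
  cases B <;> first | exact ⟨_, rfl⟩ | simp [Iso] at h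

theorem iso_refl : ∀ A : Pos, Iso A A
  | termL => by rw [Iso]; trivial
  | termR => by rw [Iso]; trivial
  | opts gs =>
      (iso_opts_iff gs gs).2 ⟨fun g hg => ⟨g, hg, iso_refl g⟩, fun g hg => ⟨g, hg, iso_refl g⟩⟩

theorem iso_opts_of_perm {gs hs : List Pos} (h : gs.Perm hs) : Iso (opts gs) (opts hs) :=
  (iso_opts_iff gs hs).2
    ⟨fun g hg => ⟨g, h.subset hg, iso_refl g⟩, fun g hg => ⟨g, h.symm.subset hg, iso_refl g⟩⟩

theorem iso_opts_map {gs gs' : List Pos} {f f' : Pos → Pos} (h : Iso (opts gs) (opts gs'))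
    (hf : ∀ g ∈ gs, ∀ g' ∈ gs', Iso g g' → Iso (f g) (f' g')) :
    Iso (opts (gs.map f)) (opts (gs'.map f')) := by
  rw [iso_opts_iff] at h ⊢
  simp only [List.mem_map, forall_exists_index, and_imp, forall_apply_eq_imp_iff₂,
    exists_exists_and_eq_and]
  refine ⟨fun g hg => ?_, fun g' hg' => ?_⟩
  · obtain ⟨g', hg', hgg'⟩ := h.1 g hg
    exact ⟨g', hg', hf g hg g' hg' hgg'⟩
  · obtain ⟨g, hg, hgg'⟩ := h.2 g' hg'
    exact ⟨g, hg, hf g hg g' hg' hgg'⟩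

theorem iso_opts_map_of_forall {hs : List Pos} {f f' : Pos → Pos}
    (hf : ∀ h ∈ hs, Iso (f h) (f' h)) : Iso (opts (hs.map f)) (opts (hs.map f')) := by
  rw [iso_opts_iff]
  simp only [List.mem_map, forall_exists_index, and_imp, forall_apply_eq_imp_iff₂,
    exists_exists_and_eq_and]
  exact ⟨fun h hh => ⟨h, hh, hf h hh⟩, fun h hh => ⟨h, hh, hf h hh⟩⟩

theorem iso_opts_append {gs gs' hs hs' : List Pos} (hg : Iso (opts gs) (opts gs'))
    (hh : Iso (opts hs) (opts hs')) : Iso (opts (gs ++ hs)) (opts (gs' ++ hs')) := by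
  rw [iso_opts_iff] at hg hh ⊢
  simp only [List.mem_append, or_and_right, exists_or]
  exact ⟨fun a ha => ha.imp (hg.1 a) (hh.1 a), fun b hb => hb.imp (hg.2 b) (hh.2 b)⟩

theorem iso_conj : ∀ {A A' : Pos}, Iso A A' → Iso (conj A) (conj A')
  | termL, _, h => by rw [eq_termL_of_iso h]; exact iso_refl _
  | termR, _, h => by rw [eq_termR_of_iso h]; exact iso_refl _
  | opts gs, _, h => by
      obtain ⟨gs', rfl⟩ := exists_eq_opts_of_iso h
      rw [conj_opts, conj_opts]
      exact iso_opts_map h fun g _ g' _ hgg' => iso_conj hgg'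

theorem sum_congr_left : ∀ {A A' : Pos} (B : Pos), Iso A A' → Iso (sum A B) (sum A' B)
  | termL, _, B, h => by rw [eq_termL_of_iso h]; exact iso_refl _
  | termR, _, B, h => by rw [eq_termR_of_iso h]; exact iso_refl _
  | opts gs, _, termL, h => by rwa [sum_termL_right, sum_termL_right]
  | opts gs, _, termR, h => by rw [sum_termR_right, sum_termR_right]; exact iso_conj h
  | opts gs, _, opts hs, h => by
      obtain ⟨gs', rfl⟩ := exists_eq_opts_of_iso h
      rw [sum_opts_opts, sum_opts_opts]
      exact iso_opts_append (iso_opts_map h fun g _ g' _ hgg' => sum_congr_left _ hgg')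
        (iso_opts_map_of_forall fun k _ => sum_congr_left k h)

theorem Wins.of_iso {p : Player} {b : Bool} {A B : Pos} (w : Wins p b A) (h : Iso A B) :
    Wins p b B := by
  induction w generalizing B with
  | termL b => rw [eq_termL_of_iso h]; exact .termL b
  | termR b => rw [eq_termR_of_iso h]; exact .termR b
  | move p gs g hg _ ih =>
      obtain ⟨hs, rfl⟩ := exists_eq_opts_of_iso h
      obtain ⟨k, hk, hgk⟩ := ((iso_opts_iff gs hs).1 h).1 g hg
      exact .move p hs k hk (ih hgk)
  | wait p gs _ ih =>
      obtain ⟨hs, rfl⟩ := exists_eq_opts_of_iso h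
      refine .wait p hs fun k hk => ?_
      obtain ⟨g, hg, hgk⟩ := ((iso_opts_iff gs hs).1 h).2 k hk
      exact ih g hg hgk

def Player.swap : Player → Player
  | Player.left => Player.right
  | Player.right => Player.left

theorem Wins.conj {p : Player} {b : Bool} {A : Pos} (w : Wins p b A) :
    Wins p.swap b (conj A) := by
  induction w with
  | termL b => rw [Pos.conj]; exact .termR b
  | termR b => rw [Pos.conj]; exact .termL b
  | move p gs g hg _ ih =>
      rw [conj_opts]
      exact .move _ _ _ (List.mem_map_of_mem hg) ih
  | wait p gs _ ih =>
      rw [conj_opts]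
      refine .wait _ _ fun g' hg' => ?_
      obtain ⟨g, hg, rfl⟩ := List.mem_map.mp hg'
      exact ih g hg

theorem Wins.not_wins_swap {p : Player} {b : Bool} {A : Pos} (w : Wins p b A) :
    ¬ Wins p.swap (!b) A := by
  induction w with
  | termL b => cases b <;> rintro ⟨⟩
  | termR b => cases b <;> rintro ⟨⟩
  | move p gs g hg _ ih =>
      intro w'
      cases p <;> cases w' with
      | wait _ _ hall => exact ih (hall g hg)
  | wait p gs _ ih =>
      intro w'
      cases p <;> cases w' with
      | move _ _ g hg hw => exact ih g hg hw

theorem outcome_eq_L_iff {A : Pos} :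
    outcome A = Outcome.L ↔ Wins Player.left true A ∧ Wins Player.left false A := by
  unfold outcome
  split_ifs <;> simp_all

theorem outcome_termL : outcome termL = Outcome.L :=
  outcome_eq_L_iff.2 ⟨.termL true, .termL false⟩

theorem outcome_ne_L_of_iso_conj {A : Pos} (h : Iso A (conj A)) : outcome A ≠ Outcome.L := by
  rw [Ne, outcome_eq_L_iff]
  rintro ⟨hfirst, hsecond⟩
  exact hfirst.not_wins_swap (conj_conj A ▸ (hsecond.of_iso h).conj)

end Pos

/-- a self-conjugate position (such as `{*L, *R}`) has no additive
inverse: for every position `G'`, the sum `G + G'` is not equivalent to `*L`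
(the identity of the monoid of game values); hence the monoid is not a group. -/
theorem no_inverse_of_selfConjugate :
    (∀ G : Pos, G.Valid → Pos.Iso G G.conj →
      ∀ G' : Pos, G'.Valid → ¬ Pos.equiv (Pos.sum G G') Pos.termL) ∧
    Pos.Iso (Pos.opts [Pos.termL, Pos.termR]) (Pos.opts [Pos.termL, Pos.termR]).conj := by
  open Pos in
  refine ⟨fun G _ hG G' _ hequiv => ?_, ?_⟩
  · have hL : outcome (sum G G') = Outcome.L := by
      simpa only [sum_termL_right, outcome_termL] using hequiv termL Valid.termL
    have hself : Iso (sum G G') (conj (sum G G')) := by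
      rw [conj_sum]
      exact sum_congr_left G' hG
    exact outcome_ne_L_of_iso_conj hself hL
  · rw [conj_opts]
    simp only [List.map_cons, List.map_nil, conj]
    exact iso_opts_of_perm (List.Perm.swap _ _ _)
end

section
/- (Domination simplification) Let G = {G_1,...,G_n} with n ≥ 1. Suppose that for every j ≥ 2, the option G_j = {G_{j1},...,G_{jm}} has some option G_{jℓ} with G_{jℓ} ≡ {G_1}. Then G ≡ {G_1}. -/
namespace Pos

def other : Player → Player
  | Player.left => Player.right
  | Player.right => Player.left

theorem wins_true_iff (p : Player) (gs : List Pos) :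
    Wins p true (opts gs) ↔ ∃ g ∈ gs, Wins p false g := by
  constructor
  · intro hw
    cases hw with
    | move _ _ g hg hwg => exact ⟨g, hg, hwg⟩
  · rintro ⟨g, hg, hwg⟩
    exact Wins.move p gs g hg hwg

theorem wins_false_iff (p : Player) (gs : List Pos) :
    Wins p false (opts gs) ↔ ∀ g ∈ gs, Wins p true g := by
  constructor
  · intro hw
    cases hw with
    | wait _ _ hwg => exact hwg
  · exact Wins.wait p gs

theorem wins_termL (p : Player) (b : Bool) : Wins p b termL ↔ p = Player.left := by
  constructor
  · intro hw; cases hw; rfl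
  · rintro rfl; exact Wins.termL b

theorem wins_termR (p : Player) (b : Bool) : Wins p b termR ↔ p = Player.right := by
  constructor
  · intro hw; cases hw; rfl
  · rintro rfl; exact Wins.termR b

theorem determinacy : ∀ (n : ℕ) (G : Pos), sizeOf G ≤ n → ∀ (p : Player) (b : Bool),
    (Wins p b G ↔ ¬ Wins (other p) (!b) G) := by
  intro n
  induction n with
  | zero =>
    intro G hG
    exfalso
    cases G <;> simp at hG <;> omega
  | succ n ih =>
    intro G hG p b
    cases G with
    | termL => cases p <;> cases b <;> simp [wins_termL, other]
    | termR => cases p <;> cases b <;> simp [wins_termR, other]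
    | opts gs =>
      have hsz : ∀ g ∈ gs, sizeOf g ≤ n := by
        intro g hg
        have h1 := List.sizeOf_lt_of_mem hg
        have h2 : sizeOf (opts gs) = 1 + sizeOf gs := by simp
        omega
      cases b with
      | true =>
        simp only [Bool.not_true]
        rw [wins_true_iff, wins_false_iff]
        constructor
        · rintro ⟨g, hg, hw⟩ hall
          exact (ih g (hsz g hg) p false).mp hw (hall g hg)
        · intro hno
          by_contra hne
          push_neg at hne
          exact hno (fun g hg =>
            not_not.mp (mt (ih g (hsz g hg) p false).mpr (hne g hg)))
      | false =>
        simp only [Bool.not_false]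
        rw [wins_false_iff, wins_true_iff]
        constructor
        · rintro hall ⟨g, hg, hw⟩
          exact (ih g (hsz g hg) p true).mp (hall g hg) hw
        · intro hno g hg
          by_contra hc
          exact hno ⟨g, hg, not_not.mp (mt (ih g (hsz g hg) p true).mpr hc)⟩

theorem wins_left_iff_of_outcome_eq {G H : Pos} (h : outcome G = outcome H) (b : Bool) :
    Wins Player.left b G ↔ Wins Player.left b H := by
  classical
  unfold outcome at h
  cases b <;> (split_ifs at h <;> simp_all)

theorem wins_iff_of_outcome_eq {G H : Pos} (h : outcome G = outcome H) (p : Player) (b : Bool) :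
    Wins p b G ↔ Wins p b H := by
  cases p with
  | left => exact wins_left_iff_of_outcome_eq h b
  | right =>
    rw [determinacy (sizeOf G) G le_rfl Player.right b,
        determinacy (sizeOf H) H le_rfl Player.right b]
    exact not_congr (wins_left_iff_of_outcome_eq h (!b))

theorem outcome_congr {A B : Pos} (hc : ∀ b, Wins Player.left b A ↔ Wins Player.left b B) :
    outcome A = outcome B := by
  classical
  have h1 := hc true
  have h2 := hc false
  unfold outcome
  split_ifs <;> first | rfl | (exfalso; tauto)

theorem Valid.mem {hs : List Pos} (h : Valid (Pos.opts hs)) {x : Pos} (hx : x ∈ hs) : Valid x := by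
  cases h with
  | opts _ hne h2 => exact h2 x hx

def extra (gs : List Pos) : Pos → List Pos
  | opts hs => hs.map (fun x => sum (opts gs) x)
  | _ => []

theorem sum_opts (gs : List Pos) (X : Pos) :
    sum (opts gs) X = opts (gs.map (fun g => sum g X) ++ extra gs X) := by
  cases X <;> simp [sum, extra]

theorem mem_extra {gs : List Pos} {X y : Pos} :
    y ∈ extra gs X ↔ ∃ hs, X = opts hs ∧ ∃ x ∈ hs, y = sum (opts gs) x := by
  cases X with
  | termL => simp [extra]
  | termR => simp [extra]
  | opts hs =>
    simp only [extra, List.mem_map]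
    constructor
    · rintro ⟨x, hx, rfl⟩
      exact ⟨hs, rfl, x, hx, rfl⟩
    · rintro ⟨hs', heq, x, hx, rfl⟩
      cases heq
      exact ⟨x, hx, rfl⟩

theorem key (G1 : Pos) (rest : List Pos)
    (h : ∀ Gj ∈ rest, ∃ js : List Pos, Gj = Pos.opts js ∧
      ∃ g ∈ js, Pos.equiv g (Pos.opts [G1])) :
    ∀ (n : ℕ) (X : Pos), sizeOf X ≤ n → Valid X → ∀ (p : Player) (b : Bool),
      (Wins p b (sum (opts (G1 :: rest)) X) ↔ Wins p b (sum (opts [G1]) X)) := by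
  intro n
  induction n with
  | zero =>
    intro X hsz
    exfalso
    cases X <;> simp at hsz <;> omega
  | succ n ih =>
    intro X hsz hX p b
    have hmem : ∀ (gs : List Pos) (y : Pos),
        (y ∈ gs.map (fun g => sum g X) ++ extra gs X) ↔
        ((∃ g ∈ gs, y = sum g X) ∨ ∃ hs, X = opts hs ∧ ∃ x ∈ hs, y = sum (opts gs) x) := by
      intro gs y
      rw [List.mem_append, List.mem_map, mem_extra]
      constructor
      · rintro (⟨g, hg, rfl⟩ | h2)
        · exact Or.inl ⟨g, hg, rfl⟩
        · exact Or.inr h2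
      · rintro (⟨g, hg, rfl⟩ | h2)
        · exact Or.inl ⟨g, hg, rfl⟩
        · exact Or.inr h2
    have hIH : ∀ {hs : List Pos}, X = opts hs → ∀ x ∈ hs, ∀ (p' : Player) (b' : Bool),
        (Wins p' b' (sum (opts (G1 :: rest)) x) ↔ Wins p' b' (sum (opts [G1]) x)) := by
      rintro hs rfl x hx p' b'
      have h1 := List.sizeOf_lt_of_mem hx
      have h2 : sizeOf (opts hs) = 1 + sizeOf hs := by simp
      exact ih x (by omega) (hX.mem hx) p' b'
    have hequiv : ∀ {g : Pos}, equiv g (opts [G1]) → ∀ (p' : Player) (b' : Bool),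
        (Wins p' b' (sum g X) ↔ Wins p' b' (sum (opts [G1]) X)) := by
      intro g hg p' b'
      exact wins_iff_of_outcome_eq (hg X hX) p' b'
    cases b with
    | true =>
      constructor
      · intro hw
        rw [sum_opts, wins_true_iff] at hw
        obtain ⟨y, hy, hwy⟩ := hw
        rcases (hmem _ y).mp hy with ⟨g, hg, rfl⟩ | ⟨hs, hXeq, x, hx, rfl⟩
        · rcases List.mem_cons.mp hg with heq | hg'
          · rw [sum_opts, wins_true_iff]
            exact ⟨sum g X, (hmem [G1] _).mpr (Or.inl ⟨G1, by simp, by rw [heq]⟩), hwy⟩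
          · obtain ⟨js, rfl, gl, hgl, hgeq⟩ := h g hg'
            rw [sum_opts, wins_false_iff] at hwy
            have h3 := hwy _ ((hmem js _).mpr (Or.inl ⟨gl, hgl, rfl⟩))
            exact (hequiv hgeq p true).mp h3
        · subst hXeq
          have h4 : Wins p false (sum (opts [G1]) x) := (hIH rfl x hx p false).mp hwy
          rw [sum_opts, wins_true_iff]
          exact ⟨_, (hmem [G1] _).mpr (Or.inr ⟨_, rfl, x, hx, rfl⟩), h4⟩
      · intro hw
        rw [sum_opts, wins_true_iff] at hw
        obtain ⟨y, hy, hwy⟩ := hw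
        rcases (hmem [G1] y).mp hy with ⟨g, hg, rfl⟩ | ⟨hs, hXeq, x, hx, rfl⟩
        · rw [List.mem_singleton] at hg
          rw [sum_opts, wins_true_iff]
          exact ⟨sum g X, (hmem _ _).mpr (Or.inl ⟨g, by simp [hg], rfl⟩), hwy⟩
        · subst hXeq
          have h4 : Wins p false (sum (opts (G1 :: rest)) x) := (hIH rfl x hx p false).mpr hwy
          rw [sum_opts, wins_true_iff]
          exact ⟨_, (hmem _ _).mpr (Or.inr ⟨_, rfl, x, hx, rfl⟩), h4⟩
    | false =>
      constructor
      · intro hw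
        rw [sum_opts, wins_false_iff] at hw
        rw [sum_opts, wins_false_iff]
        intro y hy
        rcases (hmem [G1] y).mp hy with ⟨g, hg, rfl⟩ | ⟨hs, hXeq, x, hx, rfl⟩
        · rw [List.mem_singleton] at hg
          exact hw _ ((hmem _ _).mpr (Or.inl ⟨g, by simp [hg], rfl⟩))
        · subst hXeq
          have h4 := hw _ ((hmem _ _).mpr (Or.inr ⟨_, rfl, x, hx, rfl⟩))
          exact (hIH rfl x hx p true).mp h4
      · intro hw
        have hw0 := hw
        rw [sum_opts, wins_false_iff] at hw
        rw [sum_opts, wins_false_iff]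
        intro y hy
        rcases (hmem _ y).mp hy with ⟨g, hg, rfl⟩ | ⟨hs, hXeq, x, hx, rfl⟩
        · rcases List.mem_cons.mp hg with heq | hg'
          · exact hw _ ((hmem [G1] _).mpr (Or.inl ⟨G1, by simp, by rw [heq]⟩))
          · obtain ⟨js, rfl, gl, hgl, hgeq⟩ := h g hg'
            rw [sum_opts, wins_true_iff]
            exact ⟨sum gl X, (hmem js _).mpr (Or.inl ⟨gl, hgl, rfl⟩),
              (hequiv hgeq p false).mpr hw0⟩
        · subst hXeq
          have h4 := hw _ ((hmem [G1] _).mpr (Or.inr ⟨_, rfl, x, hx, rfl⟩))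
          exact (hIH rfl x hx p true).mpr h4

end Pos

/-- domination simplification: if `G = {G_1,...,G_n}` and every
option `G_j` with `j ≥ 2` has an option `≡ {G_1}`, then `G ≡ {G_1}`. -/
theorem domination_simplification (G1 : Pos) (rest : List Pos)
    (hV : (Pos.opts (G1 :: rest)).Valid)
    (h : ∀ Gj ∈ rest, ∃ js : List Pos, Gj = Pos.opts js ∧
      ∃ g ∈ js, Pos.equiv g (Pos.opts [G1])) :
    Pos.equiv (Pos.opts (G1 :: rest)) (Pos.opts [G1]) := by
  intro X hX
  have hk := Pos.key G1 rest h (sizeOf X) X le_rfl hX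
  exact Pos.outcome_congr (fun b => hk Pos.Player.left b)
end
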